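/- Stampacchia's lemma: Let φ : [k₀,∞) → [0,∞) be nonincreasing and suppose there exist C > 0, α > 0 and β > 1 such that φ(h) ≤ C (h−k)^{−α} φ(k)^β for all h > k ≥ k₀. Then φ(k₀ + t) = 0 for t = C^{1/α} φ(k₀)^{(β−1)/α} 2^{β/(β−1)}. -/

import Mathlib

open Real Filter

lemma key_eq (C φ₀ α β : ℝ) (hC : 0 < C) (hφ : 0 < φ₀) (hα : 0 < α) (hβ : 1 < β) (n : ℕ) :
    C * ((C ^ (1/α) * φ₀ ^ ((β - 1)/α) * 2 ^ (β/(β - 1))) * 2 ^ (-((n:ℝ)+1))) ^ (-α)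
      * (φ₀ * 2 ^ (-(n:ℝ) * (α/(β - 1)))) ^ β
    = φ₀ * 2 ^ (-((n:ℝ)+1) * (α/(β - 1))) := by
  have h2 : (0:ℝ) < 2 := two_pos
  have hb : β - 1 ≠ 0 := by linarith
  have ha : α ≠ 0 := hα.ne'
  rw [show C = exp (log C) from (exp_log hC).symm,
      show φ₀ = exp (log φ₀) from (exp_log hφ).symm,
      show (2:ℝ) = exp (log 2) from (exp_log h2).symm]
  rw [← exp_mul, ← exp_mul, ← exp_mul, ← exp_mul, ← exp_mul, ← exp_add, ← exp_add,
      ← exp_add, ← exp_mul, ← exp_mul, ← exp_add, ← exp_add, ← exp_mul, ← exp_add, ← exp_add]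
  rw [Real.exp_eq_exp]
  field_simp
  ring

/-- **Stampacchia's lemma.** If `φ : [k₀,∞) → [0,∞)` is nonincreasing and
`φ(h) ≤ C (h-k)^{-α} φ(k)^β` for all `h > k ≥ k₀` with `C > 0`, `α > 0`, `β > 1`, then
`φ(k₀ + t) = 0` for `t = C^{1/α} φ(k₀)^{(β-1)/α} 2^{β/(β-1)}`. -/
theorem statement15 (k₀ : ℝ) (φ : ℝ → ℝ)
    (hpos : ∀ k, k₀ ≤ k → 0 ≤ φ k)
    (hmono : ∀ h k, k₀ ≤ k → k ≤ h → φ h ≤ φ k)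
    (C α β : ℝ) (hC : 0 < C) (hα : 0 < α) (hβ : 1 < β)
    (hiter : ∀ h k, k₀ ≤ k → k < h → φ h ≤ C * (h - k) ^ (-α) * φ k ^ β) :
    φ (k₀ + C ^ (1/α) * φ k₀ ^ ((β - 1)/α) * 2 ^ (β/(β - 1))) = 0 := by
  rcases eq_or_lt_of_le (hpos k₀ le_rfl) with hφ0 | hφ0
  · -- φ k₀ = 0
    rw [← hφ0, Real.zero_rpow (ne_of_gt (div_pos (by linarith) hα))]
    simpa using hφ0.symm
  set φ₀ := φ k₀ with hφ₀def
  set d := C ^ (1/α) * φ₀ ^ ((β - 1)/α) * 2 ^ (β/(β - 1)) with hd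
  set μ := α / (β - 1) with hμ
  have hμpos : 0 < μ := div_pos hα (by linarith)
  have hdpos : 0 < d := by positivity
  have hle1 : ∀ n : ℕ, (2:ℝ) ^ (-(n:ℝ)) ≤ 1 := fun n =>
    Real.rpow_le_one_of_one_le_of_nonpos one_le_two (neg_nonpos.mpr (Nat.cast_nonneg n))
  have hk0le : ∀ n : ℕ, k₀ ≤ k₀ + d * (1 - 2 ^ (-(n:ℝ))) := fun n => by
    nlinarith [hle1 n, Real.rpow_pos_of_pos two_pos (-(n:ℝ))]
  have main : ∀ n : ℕ, φ (k₀ + d * (1 - 2 ^ (-(n:ℝ)))) ≤ φ₀ * 2 ^ (-(n:ℝ) * μ) := by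
    intro n
    induction n with
    | zero => simp; exact le_of_eq hφ₀def.symm
    | succ n ih =>
      push_cast
      have hlt : k₀ + d * (1 - 2 ^ (-(n:ℝ))) < k₀ + d * (1 - 2 ^ (-((n:ℝ)+1))) := by
        have : (2:ℝ) ^ (-((n:ℝ)+1)) < 2 ^ (-(n:ℝ)) :=
          Real.rpow_lt_rpow_of_exponent_lt one_lt_two (by linarith)
        nlinarith
      have hdiff : (k₀ + d * (1 - 2 ^ (-((n:ℝ)+1)))) - (k₀ + d * (1 - 2 ^ (-(n:ℝ))))
          = d * 2 ^ (-((n:ℝ)+1)) := by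
        have h2 : (2:ℝ) ^ (-(n:ℝ)) = 2 ^ (-((n:ℝ)+1)) * 2 := by
          rw [← Real.rpow_add_one (by norm_num : (2:ℝ) ≠ 0)]; ring_nf
        rw [h2]; ring
      have step := hiter _ _ (hk0le n) hlt
      rw [hdiff] at step
      have hβ' : φ (k₀ + d * (1 - 2 ^ (-(n:ℝ)))) ^ β ≤ (φ₀ * 2 ^ (-(n:ℝ) * μ)) ^ β :=
        Real.rpow_le_rpow (hpos _ (hk0le n)) ih (by linarith)
      have hXpos : (0:ℝ) < (d * 2 ^ (-((n:ℝ)+1))) ^ (-α) :=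
        Real.rpow_pos_of_pos (by positivity) _
      calc φ (k₀ + d * (1 - 2 ^ (-((n:ℝ)+1))))
          ≤ C * (d * 2 ^ (-((n:ℝ)+1))) ^ (-α) * φ (k₀ + d * (1 - 2 ^ (-(n:ℝ)))) ^ β := by
            exact step
        _ ≤ C * (d * 2 ^ (-((n:ℝ)+1))) ^ (-α) * (φ₀ * 2 ^ (-(n:ℝ) * μ)) ^ β := by
            apply mul_le_mul_of_nonneg_left hβ' (by positivity)
        _ = φ₀ * 2 ^ (-((n:ℝ)+1) * μ) := key_eq C φ₀ α β hC hφ0 hα hβ n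
  -- pass to the limit
  have hub : ∀ n : ℕ, φ (k₀ + d) ≤ φ₀ * 2 ^ (-(n:ℝ) * μ) := by
    intro n
    refine le_trans (hmono _ _ (hk0le n) ?_) (main n)
    nlinarith [Real.rpow_pos_of_pos two_pos (-(n:ℝ))]
  have hT : Tendsto (fun n : ℕ => φ₀ * 2 ^ (-(n:ℝ) * μ)) atTop (nhds 0) := by
    have heq : ∀ n : ℕ, (2:ℝ) ^ (-(n:ℝ) * μ) = ((2:ℝ) ^ (-μ)) ^ n := by
      intro n
      rw [← Real.rpow_natCast ((2:ℝ) ^ (-μ)) n, ← Real.rpow_mul (by norm_num)]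
      ring_nf
    simp_rw [heq]
    have hr : (2:ℝ) ^ (-μ) < 1 :=
      Real.rpow_lt_one_of_one_lt_of_neg one_lt_two (by linarith)
    have := (tendsto_pow_atTop_nhds_zero_of_lt_one (by positivity) hr).const_mul φ₀
    simpa using this
  have h0 : φ (k₀ + d) ≤ 0 :=
    le_of_tendsto_of_tendsto' tendsto_const_nhds hT hub
  exact le_antisymm h0 (hpos _ (by nlinarith))
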